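/- arXiv:2507.21180 — 2 statements merged into one kernel-verified Lean document; each statement's English description precedes it below -/
import Mathlib

section
/- There exists a bijection f : ℝ⁴ → ℝ⁴ that respects lightlike relatedness (p λ q ⟺ f(p) λ f(q) for all p, q) but does not respect absolute simultaneity (there exist p, q with p S q but not f(p) S f(q)). In particular, any Lorentz boost with nonzero speed (taking c = 1) is such a map. -/
/-- Spacetime points: elements of ℝ⁴. -/
abbrev Pt : Type := Fin 4 → ℝ

/-- Lightlike relatedness λ. -/
def lightlike (p q : Pt) : Prop :=
  (p 0 - q 0) ^ 2 = (p 1 - q 1) ^ 2 + (p 2 - q 2) ^ 2 + (p 3 - q 3) ^ 2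

/-- Absolute simultaneity S. -/
def simul (p q : Pt) : Prop := p 0 = q 0

/-!
A Lorentz boost along the x-axis mixes t and x by a hyperbolic rotation, which preserves
(Δt)² - (Δx)² because cosh² - sinh² = 1 and leaves y, z alone; hence it preserves the light cone.
For nonzero rapidity it moves the point (0,1,0,0), simultaneous with the origin, to a nonzero time.
-/

open Real

/-- Rapidity `φ`, i.e. speed `tanh φ`. -/
noncomputable def boost (φ : ℝ) (p : Pt) : Pt :=
  ![cosh φ * p 0 - sinh φ * p 1, cosh φ * p 1 - sinh φ * p 0, p 2, p 3]

lemma hyperbolic_rotation_sq_sub_sq (φ a b : ℝ) :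
    (cosh φ * a - sinh φ * b) ^ 2 - (cosh φ * b - sinh φ * a) ^ 2 = a ^ 2 - b ^ 2 := by
  linear_combination (a ^ 2 - b ^ 2) * cosh_sq_sub_sinh_sq φ

lemma boost_neg_boost (φ : ℝ) : Function.LeftInverse (boost (-φ)) (boost φ) := by
  intro p
  ext i
  fin_cases i <;> simp [boost] <;> linear_combination (p _) * cosh_sq_sub_sinh_sq φ

lemma boost_bijective (φ : ℝ) : Function.Bijective (boost φ) := by
  have h := boost_neg_boost (-φ)
  rw [neg_neg] at h
  exact Function.bijective_iff_has_inverse.mpr ⟨boost (-φ), boost_neg_boost φ, h⟩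

lemma lightlike_boost_iff (φ : ℝ) (p q : Pt) :
    lightlike (boost φ p) (boost φ q) ↔ lightlike p q := by
  have key := hyperbolic_rotation_sq_sub_sq φ (p 0 - q 0) (p 1 - q 1)
  simp only [lightlike, boost, Matrix.cons_val]
  constructor
  · intro h
    linear_combination h - key
  · intro h
    linear_combination h + key

lemma exists_simul_not_simul_boost {φ : ℝ} (hφ : φ ≠ 0) :
    ∃ p q : Pt, simul p q ∧ ¬ simul (boost φ p) (boost φ q) := by
  refine ⟨0, Pi.single 1 1, rfl, ?_⟩
  simpa [simul, boost] using hφ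

/-- There is a bijection of ℝ⁴ that respects lightlike relatedness but does not
respect absolute simultaneity (e.g. any Lorentz boost with nonzero speed). -/
theorem exists_bijection_respecting_lightlike_not_simul :
    ∃ f : Pt → Pt, Function.Bijective f ∧
      (∀ p q : Pt, lightlike p q ↔ lightlike (f p) (f q)) ∧
      (∃ p q : Pt, simul p q ∧ ¬ simul (f p) (f q)) :=
  ⟨boost 1, boost_bijective 1, fun p q => (lightlike_boost_iff 1 p q).symm,
    exists_simul_not_simul_boost one_ne_zero⟩
end

section
/- (Scal∘Triv) ∩ Poi↑ = Triv↑: an orthochronous Poincaré transformation is a scaling composed with a trivial transformation if and only if it is itself an orthochronous trivial transformation. -/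
/-- Squared Minkowski length. -/
def sqMink (p : Pt) : ℝ := p 0 ^ 2 - p 1 ^ 2 - p 2 ^ 2 - p 3 ^ 2

/-- Squared Euclidean length. -/
def sqEucl (p : Pt) : ℝ := p 0 ^ 2 + p 1 ^ 2 + p 2 ^ 2 + p 3 ^ 2

/-- Translations of ℝ⁴. -/
def IsTranslation (τ : Pt → Pt) : Prop := ∃ b : Pt, ∀ p, τ p = p + b

/-- Lorentz transformations: bijective linear maps preserving squared Minkowski length. -/
def IsLorentz (L : Pt → Pt) : Prop :=
  IsLinearMap ℝ L ∧ Function.Bijective L ∧ ∀ p, sqMink (L p) = sqMink p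

/-- Poincaré transformations: translations composed with Lorentz transformations. -/
def IsPoincare (P : Pt → Pt) : Prop :=
  ∃ τ L, IsTranslation τ ∧ IsLorentz L ∧ P = τ ∘ L

/-- Euclidean isometries: translations composed with bijective linear maps preserving
squared Euclidean length. -/
def IsEuclIsom (A : Pt → Pt) : Prop :=
  ∃ τ L, IsTranslation τ ∧ IsLinearMap ℝ L ∧ Function.Bijective L ∧
    (∀ p, sqEucl (L p) = sqEucl p) ∧ A = τ ∘ L

/-- Vertical lines: lines parallel to the time axis. -/
def IsVerticalLine (ℓ : Set Pt) : Prop :=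
  ∃ q : Pt, ℓ = {p | p 1 = q 1 ∧ p 2 = q 2 ∧ p 3 = q 3}

/-- Trivial transformations: Euclidean isometries taking vertical lines to vertical lines. -/
def IsTrivial (A : Pt → Pt) : Prop :=
  IsEuclIsom A ∧ ∀ ℓ, IsVerticalLine ℓ → IsVerticalLine (A '' ℓ)

/-- Scalings: maps `p ↦ a • p` with `a ≠ 0`. -/
def IsScaling (D : Pt → Pt) : Prop := ∃ a : ℝ, a ≠ 0 ∧ ∀ p, D p = a • p

/-- The point (1,0,0,0). -/
def unitTime : Pt := fun i => if i = 0 then 1 else 0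

/-- Orthochronous maps: maps not changing the direction of time. -/
def Orthochronous (A : Pt → Pt) : Prop := A unitTime 0 > A 0 0

/-- The set of Poincaré transformations. -/
def Poi : Set (Pt → Pt) := {P | IsPoincare P}

/-- The set of orthochronous Poincaré transformations. -/
def PoiUp : Set (Pt → Pt) := {P | IsPoincare P ∧ Orthochronous P}

/-- The set of trivial transformations. -/
def Triv : Set (Pt → Pt) := {T | IsTrivial T}

/-- The set of orthochronous trivial transformations. -/
def TrivUp : Set (Pt → Pt) := {T | IsTrivial T ∧ Orthochronous T}

/-- The set of scalings. -/
def Scal : Set (Pt → Pt) := {D | IsScaling D}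

/-- Composition of two sets of functions: `H ∘ G = {h ∘ g : h ∈ H, g ∈ G}`. -/
def setComp (H G : Set (Pt → Pt)) : Set (Pt → Pt) := {f | ∃ h ∈ H, ∃ g ∈ G, f = h ∘ g}

/-- A set of functions forms a group under composition. -/
def IsCompGroup (G : Set (Pt → Pt)) : Prop :=
  id ∈ G ∧ (∀ f ∈ G, ∀ g ∈ G, f ∘ g ∈ G) ∧
    ∀ f ∈ G, ∃ g ∈ G, f ∘ g = id ∧ g ∘ f = id


/-! The linear part of a trivial transformation is Euclidean-orthogonal and maps the time axis
to itself, so it preserves the time coordinate up to sign and therefore the Minkowski length: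
trivial transformations are Poincaré. Conversely, if `a • T` is Poincaré with `T` trivial,
comparing the Minkowski lengths of the images of `(1,0,0,0)` forces `a² = 1`, and then `a • T`
is again trivial. -/

open Matrix

lemma sqEucl_eq_dotProduct (p : Pt) : sqEucl p = p ⬝ᵥ p := by
  simp only [sqEucl, dotProduct, Fin.sum_univ_four]; ring

lemma sqMink_eq_two_mul_sq_sub_sqEucl (p : Pt) : sqMink p = 2 * p 0 ^ 2 - sqEucl p := by
  simp only [sqMink, sqEucl]; ring

lemma sqEucl_smul (a : ℝ) (p : Pt) : sqEucl (a • p) = a ^ 2 * sqEucl p := by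
  simp only [sqEucl, Pi.smul_apply, smul_eq_mul]; ring

lemma sqMink_smul (a : ℝ) (p : Pt) : sqMink (a • p) = a ^ 2 * sqMink p := by
  simp only [sqMink, Pi.smul_apply, smul_eq_mul]; ring

lemma sqEucl_unitTime : sqEucl unitTime = 1 := by
  simp [sqEucl, unitTime]

lemma sqMink_unitTime : sqMink unitTime = 1 := by
  simp [sqMink, unitTime]

lemma dotProduct_unitTime (p : Pt) : p ⬝ᵥ unitTime = p 0 := by
  simp [dotProduct, unitTime]

lemma dotProduct_map_of_sqEucl_map {L : Pt → Pt} (hL : IsLinearMap ℝ L)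
    (hE : ∀ p, sqEucl (L p) = sqEucl p) (p q : Pt) : L p ⬝ᵥ L q = p ⬝ᵥ q := by
  have h := hE (p + q)
  simp only [hL.map_add, sqEucl_eq_dotProduct, add_dotProduct, dotProduct_add,
    dotProduct_comm q p, dotProduct_comm (L q) (L p)] at h
  have hp := hE p
  have hq := hE q
  rw [sqEucl_eq_dotProduct, sqEucl_eq_dotProduct] at hp hq
  linarith

/-- By polarization `(L p)₀ (L e₀)₀ = p₀` with `(L e₀)₀ = ±1`, so `L` preserves `p₀²`,
and `sqMink = 2 p₀² - sqEucl`. -/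
lemma sqMink_map_of_sqEucl_map {L : Pt → Pt} (hL : IsLinearMap ℝ L)
    (hE : ∀ p, sqEucl (L p) = sqEucl p)
    (h1 : L unitTime 1 = 0) (h2 : L unitTime 2 = 0) (h3 : L unitTime 3 = 0) (p : Pt) :
    sqMink (L p) = sqMink p := by
  have hc : L unitTime 0 ^ 2 = 1 := by
    have h := hE unitTime
    rw [sqEucl_unitTime, sqEucl, h1, h2, h3] at h
    linarith
  have hdot : L p 0 * L unitTime 0 = p 0 := by
    have h := dotProduct_map_of_sqEucl_map hL hE p unitTime
    rw [dotProduct_unitTime, dotProduct, Fin.sum_univ_four, h1, h2, h3] at h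
    linarith
  have hsq : L p 0 ^ 2 = p 0 ^ 2 := by
    rw [← hdot, mul_pow, hc, mul_one]
  rw [sqMink_eq_two_mul_sq_sub_sqEucl, sqMink_eq_two_mul_sq_sub_sqEucl, hsq, hE]

lemma IsVerticalLine.apply_eq_of_mem {ℓ : Set Pt} (hℓ : IsVerticalLine ℓ) {p q : Pt}
    (hp : p ∈ ℓ) (hq : q ∈ ℓ) : p 1 = q 1 ∧ p 2 = q 2 ∧ p 3 = q 3 := by
  obtain ⟨r, rfl⟩ := hℓ
  obtain ⟨hp1, hp2, hp3⟩ := hp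
  obtain ⟨hq1, hq2, hq3⟩ := hq
  exact ⟨hp1.trans hq1.symm, hp2.trans hq2.symm, hp3.trans hq3.symm⟩

lemma IsVerticalLine.image_smul {ℓ : Set Pt} (hℓ : IsVerticalLine ℓ) {a : ℝ} (ha : a ≠ 0) :
    IsVerticalLine ((a • ·) '' ℓ) := by
  obtain ⟨q, rfl⟩ := hℓ
  refine ⟨a • q, ?_⟩
  ext p
  simp only [Set.image_smul, Set.mem_smul_set_iff_inv_smul_mem₀ ha, Set.mem_ofPred_eq,
    Pi.smul_apply, smul_eq_mul, inv_mul_eq_iff_eq_mul₀ ha]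

/-- The linear part of a trivial transformation maps the time axis into itself, since the
image of the time axis is a vertical line through `T 0`. -/
lemma IsTrivial.isPoincare {T : Pt → Pt} (hT : IsTrivial T) : IsPoincare T := by
  obtain ⟨⟨τ, L, ⟨b, hb⟩, hL, hbij, hE, rfl⟩, hv⟩ := hT
  have hTL : ∀ p, (τ ∘ L) p = L p + b := fun p => hb (L p)
  obtain ⟨h1, h2, h3⟩ := (hv _ ⟨0, rfl⟩).apply_eq_of_mem
    (Set.mem_image_of_mem _ (show unitTime ∈ _ by simp [unitTime]))
    (Set.mem_image_of_mem _ (show (0 : Pt) ∈ _ by simp))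
  simp only [hTL, hL.map_zero, Pi.add_apply, Pi.zero_apply, zero_add, add_eq_right] at h1 h2 h3
  exact ⟨τ, L, ⟨b, hb⟩, ⟨hL, hbij, sqMink_map_of_sqEucl_map hL hE h1 h2 h3⟩, rfl⟩

lemma IsTrivial.smul {T : Pt → Pt} (hT : IsTrivial T) {a : ℝ} (ha : a ^ 2 = 1) :
    IsTrivial (a • T) := by
  obtain ⟨⟨τ, L, ⟨b, hb⟩, hL, hbij, hE, rfl⟩, hv⟩ := hT
  have ha0 : a ≠ 0 := by rintro rfl; norm_num at ha
  have hscal : Function.Involutive (a • · : Pt → Pt) := fun p => by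
    simp only [smul_smul, ← sq, ha, one_smul]
  refine ⟨⟨(· + a • b), (a • L ·), ⟨a • b, fun _ => rfl⟩, (a • hL.mk' L).isLinear,
    hscal.bijective.comp hbij, fun p => by rw [sqEucl_smul, ha, one_mul, hE], ?_⟩, ?_⟩
  · funext p
    simp [hb, smul_add]
  · intro ℓ hℓ
    rw [show a • (τ ∘ L) = (a • ·) ∘ (τ ∘ L) from rfl, Set.image_comp]
    exact (hv ℓ hℓ).image_smul ha0

lemma IsPoincare.sqMink_sub_apply_zero {P : Pt → Pt} (hP : IsPoincare P) (p : Pt) :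
    sqMink (P p - P 0) = sqMink p := by
  obtain ⟨τ, L, ⟨b, hb⟩, ⟨hL, -, hM⟩, rfl⟩ := hP
  simp only [Function.comp_apply, hb, hL.map_zero, zero_add, add_sub_cancel_right, hM]

/-- (Scal∘Triv) ∩ Poi↑ = Triv↑. -/
theorem scalTriv_inter_poiUp_eq_trivUp : setComp Scal Triv ∩ PoiUp = TrivUp := by
  ext f
  constructor
  · rintro ⟨⟨D, ⟨a, -, hD⟩, T, hT, rfl⟩, hP, hO⟩
    have hDT : D ∘ T = a • T := funext fun p => hD (T p)
    rw [hDT] at hP hO ⊢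
    have ha : a ^ 2 = 1 := by
      have h := hP.sqMink_sub_apply_zero unitTime
      rwa [Pi.smul_apply, Pi.smul_apply, ← smul_sub, sqMink_smul,
        hT.isPoincare.sqMink_sub_apply_zero, sqMink_unitTime, mul_one] at h
    exact ⟨hT.smul ha, hO⟩
  · rintro ⟨hT, hO⟩
    exact ⟨⟨id, ⟨1, one_ne_zero, fun p => (one_smul ℝ p).symm⟩, f, hT, rfl⟩, hT.isPoincare, hO⟩
end
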